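/- Any pairwise anticommuting subset G ⊆ (𝔽₂)^{2n} satisfies |G| ≤ 2n + 1. -/

import Mathlib

/-- The phase space `(𝔽₂)^{2n}`, modeled as pairs of vectors in `𝔽₂ⁿ`. -/
abbrev V (n : ℕ) := (Fin n → ZMod 2) × (Fin n → ZMod 2)

/-- The standard symplectic bilinear form `ω((a,b),(c,d)) = a·d + b·c`. -/
def sympl {n : ℕ} (P Q : V n) : ZMod 2 :=
  ∑ i, (P.1 i * Q.2 i + P.2 i * Q.1 i)

/-- A finite set is (pairwise) anticommuting if `ω(P,Q) = 1` for all distinct `P, Q`. -/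
def AC {n : ℕ} (G : Finset (V n)) : Prop :=
  ∀ P ∈ G, ∀ Q ∈ G, P ≠ Q → sympl P Q = 1

/-- A maximal pairwise anticommuting set: no strictly larger set is anticommuting. -/
def MaxAC {n : ℕ} (G : Finset (V n)) : Prop :=
  AC G ∧ ∀ H : Finset (V n), G ⊆ H → AC H → H = G

/-!
Fix `P₀ ∈ G`. If `∑ g P • P = 0` over `P ∈ G \ {P₀}`, pairing with `P₀` gives `∑ g P = 0`, and
pairing with `Q ∈ G \ {P₀}` gives `∑ g P - g Q = 0`, since `ω(Q, Q) = 0`. Hence `g Q = 0`, so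
`G \ {P₀}` is linearly independent in the `2n`-dimensional space `V n`.
-/

theorem linearIndependent_of_pairing_eq_one {R M ι : Type*} [CommRing R] [AddCommGroup M]
    [Module R M] [Fintype ι] (B : M →ₗ[R] M →ₗ[R] R) (v : ι → M) (x₀ : M)
    (hoff : ∀ i j, i ≠ j → B (v i) (v j) = 1) (hdiag : ∀ i, B (v i) (v i) = 0)
    (hx₀ : ∀ i, B (v i) x₀ = 1) : LinearIndependent R v := by
  classical
  rw [Fintype.linearIndependent_iff]
  intro g hg j
  have pair (y : M) : ∑ i, g i * B (v i) y = 0 := by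
    simpa [map_sum, map_smul] using congrArg (B · y) hg
  have hsum : ∑ i, g i = 0 := by simpa [hx₀] using pair x₀
  have hoff_sum :
      ∑ i ∈ Finset.univ.erase j, g i * B (v i) (v j) = ∑ i ∈ Finset.univ.erase j, g i :=
    Finset.sum_congr rfl fun i hi => by rw [hoff i j (Finset.ne_of_mem_erase hi), mul_one]
  calc g j = ∑ i, g i - ∑ i, g i * B (v i) (v j) := by
        rw [← Finset.add_sum_erase _ _ (Finset.mem_univ j),
          ← Finset.add_sum_erase _ (fun i => g i * B (v i) (v j)) (Finset.mem_univ j),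
          hdiag, hoff_sum]
        ring
    _ = 0 := by rw [hsum, pair, sub_zero]

def symplForm (n : ℕ) : V n →ₗ[ZMod 2] V n →ₗ[ZMod 2] ZMod 2 :=
  LinearMap.mk₂ (ZMod 2) sympl
    (fun _ _ _ => by simp only [sympl, Prod.fst_add, Prod.snd_add, Pi.add_apply,
      ← Finset.sum_add_distrib]; exact Finset.sum_congr rfl fun _ _ => by ring)
    (fun _ _ _ => by simp only [sympl, Prod.smul_fst, Prod.smul_snd, Pi.smul_apply, smul_eq_mul,
      Finset.mul_sum]; exact Finset.sum_congr rfl fun _ _ => by ring)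
    (fun _ _ _ => by simp only [sympl, Prod.fst_add, Prod.snd_add, Pi.add_apply,
      ← Finset.sum_add_distrib]; exact Finset.sum_congr rfl fun _ _ => by ring)
    (fun _ _ _ => by simp only [sympl, Prod.smul_fst, Prod.smul_snd, Pi.smul_apply, smul_eq_mul,
      Finset.mul_sum]; exact Finset.sum_congr rfl fun _ _ => by ring)

theorem sympl_self {n : ℕ} (P : V n) : sympl P P = 0 := by
  simp [sympl, mul_comm, CharTwo.add_self_eq_zero]

theorem finrank_V (n : ℕ) : Module.finrank (ZMod 2) (V n) = 2 * n := by
  simp [Module.finrank_prod, two_mul]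

theorem AC.linearIndependent_erase {n : ℕ} {G : Finset (V n)} (hG : AC G) {P₀ : V n}
    (hP₀ : P₀ ∈ G) : LinearIndependent (ZMod 2) (fun P => P : G.erase P₀ → V n) :=
  linearIndependent_of_pairing_eq_one (symplForm n) _ P₀
    (fun P Q hPQ => hG P (Finset.mem_of_mem_erase P.2) Q (Finset.mem_of_mem_erase Q.2)
      (Subtype.coe_ne_coe.mpr hPQ))
    (fun P => sympl_self (P : V n))
    (fun P => hG P (Finset.mem_of_mem_erase P.2) P₀ hP₀ (Finset.ne_of_mem_erase P.2))

theorem stmt_12 {n : ℕ} (G : Finset (V n)) (hG : AC G) : G.card ≤ 2 * n + 1 := by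
  rcases G.eq_empty_or_nonempty with rfl | ⟨P₀, hP₀⟩
  · simp
  have hcard := (hG.linearIndependent_erase hP₀).finset_card_le_finrank
  rw [finrank_V, Finset.card_erase_of_mem hP₀] at hcard
  omega
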